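/- arXiv:2205.11506 — 2 statements merged into one kernel-verified Lean document; each statement's English description precedes it below -/
import Mathlib

section
/- Let N ≥ 2 and G ≥ 1 be integers with G dividing N. Let E be a real inner product space, v : Fin N → E a family of unit vectors (‖v x‖ = 1 for all x) with ⟨v x, v y⟩ ≥ 0 for all x, y, and c : Fin N → Fin G a cluster assignment each of whose fibers has exactly N/G elements. Let μ_g = (G/N) · Σ_{x : c x = g} v x denote the centroid of cluster g, and let δ ≥ 0 be a real number such that ⟨μ_g, v x⟩ ≤ δ whenever c x ≠ g. Then (1/(N(N−1))) · Σ_{x ≠ y} ⟨v x, v y⟩² ≤ (N/(N−1)) · (1/G + (1 − 1/G) · (2δ + (G−1)δ²)). -/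
/-!
Since `0 ≤ ⟪v x, v y⟫ ≤ 1`, the off-diagonal sum of squares is at most `‖∑ x, v x‖²`.
Grouping by cluster, `∑ x, v x = (N / G) • ∑ g, μ g`, and the Gram matrix of the centroids has
diagonal entries at most `1` (each `μ g` is an average of unit vectors) and off-diagonal entries
at most `δ` (`⟪μ g, μ h⟫` is the average of `⟪μ g, v x⟫` over cluster `h`). Hence
`‖∑ g, μ g‖² ≤ G (1 + (G - 1) δ)`, which gives the sharper bound
`(N / (N - 1)) (1 / G + (1 - 1 / G) δ)`.
-/

open scoped RealInnerProductSpace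
open Finset

section

variable {ι E : Type*} [NormedAddCommGroup E] [InnerProductSpace ℝ E]

theorem norm_sum_sq_eq_sum_sum_inner [Fintype ι] (v : ι → E) :
    ‖∑ x, v x‖ ^ 2 = ∑ x, ∑ y, ⟪v x, v y⟫ := by
  rw [← real_inner_self_eq_norm_sq, sum_inner]
  simp_rw [inner_sum]

theorem sum_sq_inner_offDiag_le_norm_sum_sq [Fintype ι] [DecidableEq ι] {v : ι → E}
    (hv : ∀ x, ‖v x‖ ≤ 1) (hnn : ∀ x y, 0 ≤ ⟪v x, v y⟫) :
    ∑ x, ∑ y ∈ univ \ {x}, ⟪v x, v y⟫ ^ 2 ≤ ‖∑ x, v x‖ ^ 2 := by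
  have hle : ∀ x y, ⟪v x, v y⟫ ≤ 1 := fun x y =>
    (real_inner_le_norm _ _).trans (mul_le_one₀ (hv x) (norm_nonneg _) (hv y))
  rw [norm_sum_sq_eq_sum_sum_inner]
  gcongr with x
  calc ∑ y ∈ univ \ {x}, ⟪v x, v y⟫ ^ 2
      ≤ ∑ y ∈ univ \ {x}, ⟪v x, v y⟫ := sum_le_sum fun y _ => sq_le (hnn x y) (hle x y)
    _ ≤ ∑ y, ⟪v x, v y⟫ := sum_le_sum_of_subset_of_nonneg sdiff_subset fun y _ _ => hnn x y

theorem inv_card_mul_sum_le {s : Finset ι} {f : ι → ℝ} {a : ℝ} (ha : 0 ≤ a)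
    (h : ∀ x ∈ s, f x ≤ a) : (#s : ℝ)⁻¹ * ∑ x ∈ s, f x ≤ a :=
  inv_mul_le_of_le_mul₀ (Nat.cast_nonneg _) ha (by simpa using sum_le_card_nsmul s f a h)

theorem norm_inv_card_smul_sum_le_one {s : Finset ι} {v : ι → E} (hv : ∀ x ∈ s, ‖v x‖ ≤ 1) :
    ‖(#s : ℝ)⁻¹ • ∑ x ∈ s, v x‖ ≤ 1 := by
  rw [norm_smul, Real.norm_of_nonneg (by positivity)]
  calc (#s : ℝ)⁻¹ * ‖∑ x ∈ s, v x‖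
      ≤ (#s : ℝ)⁻¹ * ∑ x ∈ s, ‖v x‖ := by gcongr; exact norm_sum_le _ _
    _ ≤ 1 := inv_card_mul_sum_le zero_le_one hv

theorem inner_inv_card_smul_sum_le {s : Finset ι} {u : E} {v : ι → E} {δ : ℝ} (hδ : 0 ≤ δ)
    (h : ∀ x ∈ s, ⟪u, v x⟫ ≤ δ) : ⟪u, (#s : ℝ)⁻¹ • ∑ x ∈ s, v x⟫ ≤ δ := by
  rw [real_inner_smul_right, inner_sum]
  exact inv_card_mul_sum_le hδ h

theorem norm_sum_sq_le_of_inner_le [Fintype ι] {μ : ι → E} {δ : ℝ} (hμ : ∀ g, ‖μ g‖ ≤ 1)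
    (hoff : ∀ g h, g ≠ h → ⟪μ g, μ h⟫ ≤ δ) :
    ‖∑ g, μ g‖ ^ 2 ≤ Fintype.card ι * (1 + (Fintype.card ι - 1) * δ) := by
  classical
  have hrow : ∀ g, ∑ h, ⟪μ g, μ h⟫ ≤ 1 + (Fintype.card ι - 1) * δ := fun g => by
    have hdiag : ⟪μ g, μ g⟫ ≤ 1 := by
      rw [real_inner_self_eq_norm_sq]
      exact pow_le_one₀ (norm_nonneg _) (hμ g)
    have hrest : ∑ h ∈ univ.erase g, ⟪μ g, μ h⟫ ≤ (Fintype.card ι - 1) * δ := by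
      have hcard : ((univ.erase g).card : ℝ) = Fintype.card ι - 1 := by
        rw [card_erase_of_mem (mem_univ g), card_univ, Nat.cast_pred (Fintype.card_pos_iff.2 ⟨g⟩)]
      have := sum_le_card_nsmul (univ.erase g) (fun h => ⟪μ g, μ h⟫) δ
        fun h hh => hoff g h (ne_of_mem_erase hh).symm
      rwa [nsmul_eq_mul, hcard] at this
    rw [← add_sum_erase _ _ (mem_univ g)]
    linarith
  calc ‖∑ g, μ g‖ ^ 2 = ∑ g, ∑ h, ⟪μ g, μ h⟫ := norm_sum_sq_eq_sum_sum_inner μ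
    _ ≤ ∑ _g : ι, (1 + (Fintype.card ι - 1) * δ) := sum_le_sum fun g _ => hrow g
    _ = Fintype.card ι * (1 + (Fintype.card ι - 1) * δ) := by
      rw [sum_const, card_univ, nsmul_eq_mul]

end

theorem div_sq_mul_mul_le {N G δ : ℝ} (hG : 1 ≤ G) (hδ : 0 ≤ δ) :
    (N / G) ^ 2 * (G * (1 + (G - 1) * δ)) ≤
      N ^ 2 * (1 / G + (1 - 1 / G) * (2 * δ + (G - 1) * δ ^ 2)) := by
  have hG1 : 0 ≤ 1 - 1 / G := by rwa [sub_nonneg, div_le_one (by positivity)]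
  calc (N / G) ^ 2 * (G * (1 + (G - 1) * δ)) = N ^ 2 * (1 / G + (1 - 1 / G) * δ) := by
        field_simp
    _ ≤ _ := by
        gcongr
        nlinarith [mul_nonneg (sub_nonneg.2 hG) (sq_nonneg δ)]

/-- Bound on the negative-pair term of the empirical spectral contrastive loss
(core of Proposition 1): for `N ≥ 2` unit vectors with pairwise nonnegative
inner products, partitioned into `G` equally sized clusters with centroids
`μ g = (G/N) • ∑_{x : c x = g} v x` and inter-cluster mixing at most `δ`,
the average squared off-diagonal inner product is bounded by
`(N/(N−1)) · (1/G + (1 − 1/G)(2δ + (G−1)δ²))`. -/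
theorem negative_pair_term_bound
    {E : Type*} [NormedAddCommGroup E] [InnerProductSpace ℝ E]
    (N G : ℕ) (hN : 2 ≤ N) (hG : 1 ≤ G) (hdvd : G ∣ N)
    (v : Fin N → E) (hunit : ∀ x, ‖v x‖ = 1)
    (hnn : ∀ x y, 0 ≤ ⟪v x, v y⟫)
    (c : Fin N → Fin G)
    (hcard : ∀ g : Fin G, (univ.filter (fun x => c x = g)).card = N / G)
    (μ : Fin G → E)
    (hμ : ∀ g : Fin G, μ g = ((G : ℝ) / N) • ∑ x ∈ univ.filter (fun x => c x = g), v x)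
    (δ : ℝ) (hδ : 0 ≤ δ)
    (hmix : ∀ (g : Fin G) (x : Fin N), c x ≠ g → ⟪μ g, v x⟫ ≤ δ) :
    (1 / ((N : ℝ) * ((N : ℝ) - 1))) *
        ∑ x : Fin N, ∑ y ∈ univ \ {x}, ⟪v x, v y⟫ ^ 2 ≤
      ((N : ℝ) / ((N : ℝ) - 1)) *
        (1 / (G : ℝ) + (1 - 1 / (G : ℝ)) * (2 * δ + ((G : ℝ) - 1) * δ ^ 2)) := by
  have hG0 : (G : ℝ) ≠ 0 := by positivity
  have hN0 : (N : ℝ) ≠ 0 := by positivity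
  have hN1 : (0 : ℝ) < N - 1 := by
    have : (2 : ℝ) ≤ N := by exact_mod_cast hN
    linarith
  have hμavg : ∀ g, μ g = (#(univ.filter (fun x => c x = g)) : ℝ)⁻¹ •
      ∑ x ∈ univ.filter (fun x => c x = g), v x := fun g => by
    rw [hμ, hcard, Nat.cast_div hdvd hG0, inv_div]
  have hμnorm : ∀ g, ‖μ g‖ ≤ 1 := fun g =>
    hμavg g ▸ norm_inv_card_smul_sum_le_one fun x _ => (hunit x).le
  have hμoff : ∀ g h, g ≠ h → ⟪μ g, μ h⟫ ≤ δ := fun g h hgh => hμavg h ▸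
    inner_inv_card_smul_sum_le hδ fun x hx => hmix g x ((mem_filter.1 hx).2 ▸ hgh.symm)
  have hsum : ∑ x, v x = ((N : ℝ) / G) • ∑ g, μ g := by
    rw [← sum_fiberwise univ c v, smul_sum]
    refine sum_congr rfl fun g _ => ?_
    rw [hμ, smul_smul, div_mul_div_cancel₀ hG0, div_self hN0, one_smul]
  calc _ ≤ 1 / ((N : ℝ) * (N - 1)) * ‖∑ x, v x‖ ^ 2 := by
        gcongr
        exact sum_sq_inner_offDiag_le_norm_sum_sq (fun x => (hunit x).le) hnn
    _ = 1 / ((N : ℝ) * (N - 1)) * ((N / G) ^ 2 * ‖∑ g, μ g‖ ^ 2) := by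
        rw [hsum, norm_smul, mul_pow, Real.norm_of_nonneg (by positivity)]
    _ ≤ 1 / ((N : ℝ) * (N - 1)) * ((N / G) ^ 2 * (G * (1 + (G - 1) * δ))) := by
        gcongr
        simpa only [Fintype.card_fin] using norm_sum_sq_le_of_inner_le hμnorm hμoff
    _ ≤ 1 / ((N : ℝ) * (N - 1)) *
          (N ^ 2 * (1 / G + (1 - 1 / G) * (2 * δ + (G - 1) * δ ^ 2))) := by
        gcongr _ * ?_
        exact div_sq_mul_mul_le (Nat.one_le_cast.2 hG) hδ
    _ = _ := by
        field_simp
end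

section
/- Let N ≥ 2 and G ≥ 1 be integers with G dividing N. Let E be a real inner product space, v : Fin N → E a family of unit vectors with ⟨v x, v y⟩ ≥ 0 for all x, y, c : Fin N → Fin G a cluster assignment each of whose fibers has exactly N/G elements, μ_g = (G/N) · Σ_{x : c x = g} v x, and δ ≥ 0 such that ⟨μ_g, v x⟩ ≤ δ whenever c x ≠ g; let ṽ : Fin N → E satisfy ṽ x = v x for all x. Then for every u, ũ : Fin N → E with ‖u x‖ ≤ 1 and ‖ũ x‖ ≤ 1 for all x, the empirical spectral contrastive loss L_spec(w, w̃) := −2 · (1/N) · Σ_x ⟨w x, w̃ x⟩ + (1/(N(N−1))) · Σ_{x ≠ y} ⟨w x, w y⟩² satisfies L_spec(v, ṽ) ≤ L_spec(u, ũ) + (N/(N−1)) · (1/G + (1 − 1/G) · (2δ + (G−1)δ²)). -/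
/-!
Since `v' = v` and the `v x` are unit vectors, the alignment term of `v` equals `-2`, its least
possible value over feature families of norm at most `1`, while the uniformity term of any family is
nonnegative. It therefore suffices to bound the uniformity term of `v`. Row by row, the `N/G` points
of its own cluster contribute at most `1` each; in each of the `G - 1` other clusters
`⟪v x, v y⟫² ≤ ⟪v x, v y⟫` because the Gram entries lie in `[0, 1]`, and the sum of these inner
products is `(N/G) ⟪μ_g, v x⟫ ≤ (N/G) δ`. Summing over rows bounds the uniformity sum by
`N² (1/G + (1 - 1/G) δ)`, which is within the claimed `ε`.
-/

open scoped RealInnerProductSpace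
open Finset

section

variable {E : Type*} [NormedAddCommGroup E] [InnerProductSpace ℝ E]

theorem real_inner_le_one_of_norm_le_one {u w : E} (hu : ‖u‖ ≤ 1) (hw : ‖w‖ ≤ 1) :
    ⟪u, w⟫ ≤ 1 :=
  (real_inner_le_norm u w).trans (mul_le_one₀ hu (norm_nonneg w) hw)

variable {ι : Type*}

theorem sum_sq_real_inner_le_real_inner_sum {v : ι → E} (hv : ∀ x, ‖v x‖ = 1)
    (hnn : ∀ x y, 0 ≤ ⟪v x, v y⟫) (x : ι) (s : Finset ι) :
    ∑ y ∈ s, ⟪v x, v y⟫ ^ 2 ≤ ⟪v x, ∑ y ∈ s, v y⟫ := by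
  rw [inner_sum]
  exact sum_le_sum fun y _ =>
    sq_le (hnn x y) (real_inner_le_one_of_norm_le_one (hv x).le (hv y).le)

variable [Fintype ι]

theorem sum_real_inner_le_card {u u' : ι → E} (hu : ∀ x, ‖u x‖ ≤ 1) (hu' : ∀ x, ‖u' x‖ ≤ 1) :
    ∑ x, ⟪u x, u' x⟫ ≤ Fintype.card ι := by
  simpa using sum_le_sum fun x (_ : x ∈ univ) => real_inner_le_one_of_norm_le_one (hu x) (hu' x)

theorem sum_real_inner_self_eq_card {v : ι → E} (hv : ∀ x, ‖v x‖ = 1) :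
    ∑ x, ⟪v x, v x⟫ = Fintype.card ι := by
  simp [hv]

theorem sum_sq_real_inner_le_of_clusters {κ : Type*} [Fintype κ] [DecidableEq κ]
    {v : ι → E} (hv : ∀ x, ‖v x‖ = 1) (hnn : ∀ x y, 0 ≤ ⟪v x, v y⟫)
    {c : ι → κ} {s : ℝ} (hcard : ∀ g, ((univ.filter fun y => c y = g).card : ℝ) ≤ s)
    {a δ : ℝ} (ha : 0 < a) {μ : κ → E} (hμ : ∀ g, μ g = a • ∑ y ∈ univ.filter fun y => c y = g, v y)
    (hmix : ∀ g x, c x ≠ g → ⟪μ g, v x⟫ ≤ δ) (x : ι) :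
    ∑ y, ⟪v x, v y⟫ ^ 2 ≤ s + (Fintype.card κ - 1) * (a⁻¹ * δ) := by
  have hown : ∑ y ∈ univ.filter (fun y => c y = c x), ⟪v x, v y⟫ ^ 2 ≤ s :=
    calc _ ≤ ∑ y ∈ univ.filter (fun y => c y = c x), (1 : ℝ) :=
          sum_le_sum fun y _ => pow_le_one₀ (hnn x y)
            (real_inner_le_one_of_norm_le_one (hv x).le (hv y).le)
      _ ≤ s := by simpa using hcard (c x)
  have hother : ∀ g ∈ univ.erase (c x),
      ∑ y ∈ univ.filter (fun y => c y = g), ⟪v x, v y⟫ ^ 2 ≤ a⁻¹ * δ := by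
    intro g hg
    calc _ ≤ ⟪v x, ∑ y ∈ univ.filter (fun y => c y = g), v y⟫ :=
          sum_sq_real_inner_le_real_inner_sum hv hnn x _
      _ = a⁻¹ * ⟪μ g, v x⟫ := by
          rw [hμ, real_inner_smul_left, real_inner_comm, inv_mul_cancel_left₀ ha.ne']
      _ ≤ a⁻¹ * δ := by
          gcongr
          exact hmix g x (ne_of_mem_erase hg).symm
  rw [← sum_fiberwise univ c, ← add_sum_erase _ _ (mem_univ (c x))]
  refine add_le_add hown ((sum_le_sum hother).trans_eq ?_)
  rw [sum_const, nsmul_eq_mul, cast_card_erase_of_mem (mem_univ _), card_univ]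

theorem sum_sum_sdiff_sq_real_inner_le [DecidableEq ι] {w : ι → E} {B : ℝ}
    (hrow : ∀ x, ∑ y, ⟪w x, w y⟫ ^ 2 ≤ B) :
    ∑ x, ∑ y ∈ univ \ {x}, ⟪w x, w y⟫ ^ 2 ≤ Fintype.card ι * B := by
  calc _ ≤ ∑ _x : ι, B := sum_le_sum fun x _ =>
        (sum_le_sum_of_subset_of_nonneg sdiff_subset fun y _ _ => sq_nonneg _).trans (hrow x)
    _ = Fintype.card ι * B := by simp

end

theorem mul_cluster_bound_le {n g δ : ℝ} (hg : 1 ≤ g) (hδ : 0 ≤ δ) :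
    n * (n / g + (g - 1) * (n / g * δ)) ≤
      n ^ 2 * (1 / g + (1 - 1 / g) * (2 * δ + (g - 1) * δ ^ 2)) := by
  have hg0 : g ≠ 0 := by positivity
  have hgap : n ^ 2 * (1 / g + (1 - 1 / g) * (2 * δ + (g - 1) * δ ^ 2)) -
      n * (n / g + (g - 1) * (n / g * δ)) = n ^ 2 * ((g - 1) / g) * (δ + (g - 1) * δ ^ 2) := by
    field_simp
    ring
  have : 0 ≤ g - 1 := by linarith
  have : 0 ≤ n ^ 2 * ((g - 1) / g) * (δ + (g - 1) * δ ^ 2) := by positivity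
  linarith

theorem spec_loss_near_optimal_general
    {E : Type*} [NormedAddCommGroup E] [InnerProductSpace ℝ E]
    (N G : ℕ) (hN : 2 ≤ N) (hG : 1 ≤ G)
    (v : Fin N → E) (hunit : ∀ x, ‖v x‖ = 1)
    (hnn : ∀ x y, 0 ≤ ⟪v x, v y⟫)
    (c : Fin N → Fin G)
    (hcard : ∀ g : Fin G, (univ.filter (fun x => c x = g)).card = N / G)
    (μ : Fin G → E)
    (hμ : ∀ g : Fin G, μ g = ((G : ℝ) / N) • ∑ x ∈ univ.filter (fun x => c x = g), v x)
    (δ : ℝ) (hδ : 0 ≤ δ)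
    (hmix : ∀ (g : Fin G) (x : Fin N), c x ≠ g → ⟪μ g, v x⟫ ≤ δ)
    (v' : Fin N → E) (haug : ∀ x, v' x = v x) :
    ∀ u u' : Fin N → E, (∀ x, ‖u x‖ ≤ 1) → (∀ x, ‖u' x‖ ≤ 1) →
      -2 * ((1 : ℝ) / N) * ∑ x : Fin N, ⟪v x, v' x⟫ +
          (1 / ((N : ℝ) * ((N : ℝ) - 1))) *
            ∑ x : Fin N, ∑ y ∈ univ \ {x}, ⟪v x, v y⟫ ^ 2 ≤
        (-2 * ((1 : ℝ) / N) * ∑ x : Fin N, ⟪u x, u' x⟫ +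
          (1 / ((N : ℝ) * ((N : ℝ) - 1))) *
            ∑ x : Fin N, ∑ y ∈ univ \ {x}, ⟪u x, u y⟫ ^ 2) +
        ((N : ℝ) / ((N : ℝ) - 1)) *
          (1 / (G : ℝ) + (1 - 1 / (G : ℝ)) * (2 * δ + ((G : ℝ) - 1) * δ ^ 2)) := by
  intro u u' hu hu'
  have hN1 : (1 : ℝ) < N := by exact_mod_cast hN
  have hG1 : (1 : ℝ) ≤ G := by exact_mod_cast hG
  have halign_v : ∑ x, ⟪v x, v' x⟫ = N := by
    simpa [haug] using sum_real_inner_self_eq_card hunit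
  have halign_u : ∑ x, ⟪u x, u' x⟫ ≤ N := by
    simpa using sum_real_inner_le_card hu hu'
  have hrow := sum_sq_real_inner_le_of_clusters (s := N / G) hunit hnn
    (fun g => by rw [hcard g]; exact Nat.cast_div_le) (by positivity) hμ hmix
  rw [Fintype.card_fin, inv_div] at hrow
  have hunif_le := sum_sum_sdiff_sq_real_inner_le hrow
  rw [Fintype.card_fin] at hunif_le
  have hunif_v : 1 / ((N : ℝ) * (N - 1)) * ∑ x, ∑ y ∈ univ \ {x}, ⟪v x, v y⟫ ^ 2 ≤
      N / (N - 1) * (1 / G + (1 - 1 / G) * (2 * δ + (G - 1) * δ ^ 2)) := by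
    have hN0 : (N : ℝ) - 1 ≠ 0 := by linarith
    calc _ ≤ 1 / ((N : ℝ) * (N - 1)) *
          (N ^ 2 * (1 / G + (1 - 1 / G) * (2 * δ + (G - 1) * δ ^ 2))) := by
          gcongr
          exact hunif_le.trans (mul_cluster_bound_le hG1 hδ)
      _ = _ := by field_simp
  have hunif_u : 0 ≤ 1 / ((N : ℝ) * (N - 1)) * ∑ x, ∑ y ∈ univ \ {x}, ⟪u x, u y⟫ ^ 2 := by
    have : (0 : ℝ) < N * (N - 1) := by nlinarith
    positivity
  have halign : 1 / (N : ℝ) * ∑ x, ⟪u x, u' x⟫ ≤ 1 / N * ∑ x, ⟪v x, v' x⟫ := by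
    rw [halign_v]
    gcongr
  linarith

/-- Empirical form of the ε-near-optimality condition in Proposition 1: a model
whose unit-normalized cluster-similarity features `v` are invariant to
augmentations (`v' = v`) and partition the data into `G` equally sized clusters
with inter-cluster mixing `δ` comes within
`ε = (N/(N−1))(1/G + (1 − 1/G)(2δ + (G−1)δ²))` of the minimum of the empirical
spectral contrastive loss over all feature families of norm at most `1`. -/
theorem spec_loss_near_optimal
    {E : Type*} [NormedAddCommGroup E] [InnerProductSpace ℝ E]
    (N G : ℕ) (hN : 2 ≤ N) (hG : 1 ≤ G) (hdvd : G ∣ N)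
    (v : Fin N → E) (hunit : ∀ x, ‖v x‖ = 1)
    (hnn : ∀ x y, 0 ≤ ⟪v x, v y⟫)
    (c : Fin N → Fin G)
    (hcard : ∀ g : Fin G, (univ.filter (fun x => c x = g)).card = N / G)
    (μ : Fin G → E)
    (hμ : ∀ g : Fin G, μ g = ((G : ℝ) / N) • ∑ x ∈ univ.filter (fun x => c x = g), v x)
    (δ : ℝ) (hδ : 0 ≤ δ)
    (hmix : ∀ (g : Fin G) (x : Fin N), c x ≠ g → ⟪μ g, v x⟫ ≤ δ)
    (v' : Fin N → E) (haug : ∀ x, v' x = v x) :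
    ∀ u u' : Fin N → E, (∀ x, ‖u x‖ ≤ 1) → (∀ x, ‖u' x‖ ≤ 1) →
      -2 * ((1 : ℝ) / N) * ∑ x : Fin N, ⟪v x, v' x⟫ +
          (1 / ((N : ℝ) * ((N : ℝ) - 1))) *
            ∑ x : Fin N, ∑ y ∈ univ \ {x}, ⟪v x, v y⟫ ^ 2 ≤
        (-2 * ((1 : ℝ) / N) * ∑ x : Fin N, ⟪u x, u' x⟫ +
          (1 / ((N : ℝ) * ((N : ℝ) - 1))) *
            ∑ x : Fin N, ∑ y ∈ univ \ {x}, ⟪u x, u y⟫ ^ 2) +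
        ((N : ℝ) / ((N : ℝ) - 1)) *
          (1 / (G : ℝ) + (1 - 1 / (G : ℝ)) * (2 * δ + ((G : ℝ) - 1) * δ ^ 2)) :=
  spec_loss_near_optimal_general N G hN hG v hunit hnn c hcard μ hμ δ hδ hmix v' haug
end
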